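/- Fix an even population size N and an even experimental size m with 2 ≤ m ≤ N. Among all treatment rules δ : {0,1}^m → [0,1], the empirical success rule δ̂ — which outputs 1 if the treated sample mean strictly exceeds the control sample mean, 1/2 if they are equal, and 0 otherwise — minimizes the worst-case finite-population regret sup_{(μ1,μ0)∈[0,1]²} Reg(m, δ, μ1, μ0). -/

import Mathlib

open Finset

/-- Probability of a Bernoulli data realization `ω : Fin m → Bool`, where the first
`m/2` units are treated (success probability `μ1`) and the rest are controls
(success probability `μ0`). -/
noncomputable def outcomeProb (m : ℕ) (μ1 μ0 : ℝ) (ω : Fin m → Bool) : ℝ :=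
  ∏ i : Fin m,
    if (i : ℕ) < m / 2 then (if ω i then μ1 else 1 - μ1)
    else (if ω i then μ0 else 1 - μ0)

/-- Expected value of a treatment rule `δ` under the experimental data distribution. -/
noncomputable def expDelta (m : ℕ) (μ1 μ0 : ℝ) (δ : (Fin m → Bool) → ℝ) : ℝ :=
  ∑ ω : Fin m → Bool, outcomeProb m μ1 μ0 ω * δ ω

/-- Expected finite-population welfare `g(m, δ, μ1, μ0)`. -/
noncomputable def welfare (N m : ℕ) (μ1 μ0 : ℝ) (δ : (Fin m → Bool) → ℝ) : ℝ :=
  ((m : ℝ) / 2) * (μ1 + μ0) +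
    ((N : ℝ) - (m : ℝ)) * (μ0 * (1 - expDelta m μ1 μ0 δ) + μ1 * expDelta m μ1 μ0 δ)

/-- Finite-population regret `Reg(m, δ, μ1, μ0)`. -/
noncomputable def regret (N m : ℕ) (μ1 μ0 : ℝ) (δ : (Fin m → Bool) → ℝ) : ℝ :=
  (N : ℝ) * max μ1 μ0 - welfare N m μ1 μ0 δ

/-- Treated sample mean. -/
noncomputable def treatedMean (m : ℕ) (ω : Fin m → Bool) : ℝ :=
  (2 / (m : ℝ)) * ∑ i : Fin m, if (i : ℕ) < m / 2 then (if ω i then (1 : ℝ) else 0) else 0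

/-- Control sample mean. -/
noncomputable def controlMean (m : ℕ) (ω : Fin m → Bool) : ℝ :=
  (2 / (m : ℝ)) * ∑ i : Fin m, if (i : ℕ) < m / 2 then 0 else (if ω i then (1 : ℝ) else 0)

/-- The empirical success rule. -/
noncomputable def esRule (m : ℕ) (ω : Fin m → Bool) : ℝ :=
  if controlMean m ω < treatedMean m ω then 1
  else if treatedMean m ω = controlMean m ω then 1 / 2
  else 0

/-!
Write `m = n + n` and split a sample into its treated half `x` and control half `y`: under
`(a, b)` the data law is `Bernoulli(a)^n ⊗ Bernoulli(b)^n`. The regrets of a rule `δ` at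
`(a, b)` and at `(b, a)` add up to a quantity depending on `δ` only through
`-(N - m)(a - b) ∑ (P_{a,b} - P_{b,a}) δ`. For `b ≤ a` the likelihood ratio `P_{a,b} / P_{b,a}`
is increasing in the number of successes of `x` minus that of `y`, so the sum is minimised by
the empirical success rule, pointwise in the data. Exchanging the two halves shows that the
empirical success rule has the same regret at `(a, b)` and `(b, a)`; hence its regret at `(a, b)`
is at most the mean of the regrets of `δ` at `(a, b)` and `(b, a)`, so at most the worst-case
regret of `δ`.
-/

section Bernoulli

variable {ι : Type*} [Fintype ι]

noncomputable def bernoulliProb (p : ℝ) (x : ι → Bool) : ℝ :=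
  ∏ i, if x i then p else 1 - p

def successes (x : ι → Bool) : ℕ :=
  #{i | x i}

lemma successes_le_card (x : ι → Bool) : successes x ≤ Fintype.card ι :=
  card_le_univ _

lemma bernoulliProb_eq_pow (p : ℝ) (x : ι → Bool) :
    bernoulliProb p x = p ^ successes x * (1 - p) ^ (Fintype.card ι - successes x) := by
  have hsplit := card_filter_add_card_filter_not (s := univ) (fun i => x i = true)
  rw [card_univ] at hsplit
  rw [bernoulliProb, prod_ite, prod_const, prod_const, successes]
  congr 2
  omega

lemma sum_bernoulliProb [DecidableEq ι] (p : ℝ) : ∑ x : ι → Bool, bernoulliProb p x = 1 := by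
  simp only [bernoulliProb]
  rw [← Fintype.prod_sum fun _ (b : Bool) => if b then p else 1 - p]
  simp

lemma pow_mul_pow_cross_le {a b : ℝ} (hb : 0 ≤ b) (hba : b ≤ a) (ha : a ≤ 1)
    {n s t : ℕ} (hs : s ≤ n) (hts : t ≤ s) :
    b ^ s * (1 - b) ^ (n - s) * (a ^ t * (1 - a) ^ (n - t)) ≤
      a ^ s * (1 - a) ^ (n - s) * (b ^ t * (1 - b) ^ (n - t)) := by
  obtain ⟨k, rfl⟩ := Nat.exists_eq_add_of_le hts
  have hn : n - t = (n - (t + k)) + k := by omega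
  have hcommon : 0 ≤ a ^ t * b ^ t * ((1 - a) ^ (n - (t + k)) * (1 - b) ^ (n - (t + k))) := by
    have : 0 ≤ 1 - a := by linarith
    have : 0 ≤ 1 - b := by linarith
    have : 0 ≤ a := by linarith
    positivity
  have hratio : (b * (1 - a)) ^ k ≤ (a * (1 - b)) ^ k :=
    pow_le_pow_left₀ (mul_nonneg hb (by linarith)) (by nlinarith) k
  calc b ^ (t + k) * (1 - b) ^ (n - (t + k)) * (a ^ t * (1 - a) ^ (n - t))
      = a ^ t * b ^ t * ((1 - a) ^ (n - (t + k)) * (1 - b) ^ (n - (t + k))) *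
          (b * (1 - a)) ^ k := by rw [hn, mul_pow]; ring
    _ ≤ a ^ t * b ^ t * ((1 - a) ^ (n - (t + k)) * (1 - b) ^ (n - (t + k))) *
          (a * (1 - b)) ^ k := mul_le_mul_of_nonneg_left hratio hcommon
    _ = a ^ (t + k) * (1 - a) ^ (n - (t + k)) * (b ^ t * (1 - b) ^ (n - t)) := by
          rw [hn, mul_pow]; ring

lemma bernoulliProb_mul_cross_le {a b : ℝ} (hb : 0 ≤ b) (hba : b ≤ a)
    (ha : a ≤ 1) {x y : ι → Bool} (hxy : successes y ≤ successes x) :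
    bernoulliProb b x * bernoulliProb a y ≤ bernoulliProb a x * bernoulliProb b y := by
  simp only [bernoulliProb_eq_pow]
  exact pow_mul_pow_cross_le hb hba ha (successes_le_card x) hxy

end Bernoulli

lemma regret_add_regret_swap (N m : ℕ) (a b : ℝ) (δ : (Fin m → Bool) → ℝ) :
    regret N m a b δ + regret N m b a δ =
      N * (2 * max a b - (a + b)) -
        (N - m) * (a - b) * (expDelta m a b δ - expDelta m b a δ) := by
  rw [regret, regret, welfare, welfare, max_comm b a]
  ring

lemma continuous_outcomeProb (m : ℕ) (ω : Fin m → Bool) :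
    Continuous fun p : ℝ × ℝ => outcomeProb m p.1 p.2 ω :=
  continuous_finsetProd _ fun i _ => by split_ifs <;> fun_prop

lemma continuous_regret (N m : ℕ) (δ : (Fin m → Bool) → ℝ) :
    Continuous fun p : ℝ × ℝ => regret N m p.1 p.2 δ := by
  have := continuous_outcomeProb m
  unfold regret welfare expDelta
  fun_prop

section Append

variable {N n : ℕ}

lemma outcomeProb_append (a b : ℝ) (x y : Fin n → Bool) :
    outcomeProb (n + n) a b (Fin.append x y) = bernoulliProb a x * bernoulliProb b y := by
  simp only [outcomeProb, Fin.prod_univ_add, Fin.append_left, Fin.append_right]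
  simp [bernoulliProb, ← two_mul]

lemma expDelta_eq_sum_append (a b : ℝ) (δ : (Fin (n + n) → Bool) → ℝ) :
    expDelta (n + n) a b δ =
      ∑ x, ∑ y, bernoulliProb a x * bernoulliProb b y * δ (Fin.append x y) := by
  rw [expDelta, ← (Fin.appendEquiv n n).sum_comp, Fintype.sum_prod_type]
  simp only [Fin.appendEquiv, Equiv.coe_fn_mk, outcomeProb_append]

lemma treatedMean_append (x y : Fin n → Bool) :
    treatedMean (n + n) (Fin.append x y) = successes x / n := by
  simp only [treatedMean, Fin.sum_univ_add, Fin.append_left, Fin.append_right]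
  simp [successes, ← two_mul, div_mul_cancel_left₀, inv_mul_eq_div]

lemma controlMean_append (x y : Fin n → Bool) :
    controlMean (n + n) (Fin.append x y) = successes y / n := by
  simp only [controlMean, Fin.sum_univ_add, Fin.append_left, Fin.append_right]
  simp [successes, ← two_mul, div_mul_cancel_left₀, inv_mul_eq_div]

lemma esRule_append (hn : 0 < n) (x y : Fin n → Bool) :
    esRule (n + n) (Fin.append x y) =
      if successes y < successes x then 1 else if successes x = successes y then 1 / 2 else 0 := by
  have hn' : (0 : ℝ) < n := Nat.cast_pos.mpr hn
  simp only [esRule, treatedMean_append, controlMean_append, div_lt_div_iff_of_pos_right hn',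
    div_left_inj' hn'.ne', Nat.cast_lt, Nat.cast_inj]

lemma esRule_append_swap (hn : 0 < n) (x y : Fin n → Bool) :
    esRule (n + n) (Fin.append y x) = 1 - esRule (n + n) (Fin.append x y) := by
  rw [esRule_append hn, esRule_append hn]
  rcases lt_trichotomy (successes x) (successes y) with h | h | h
  · simp [h, h.ne, h.not_gt]
  · norm_num [h]
  · simp [h, h.ne, h.not_gt]

lemma expDelta_esRule_swap (hn : 0 < n) (a b : ℝ) :
    expDelta (n + n) b a (esRule (n + n)) = 1 - expDelta (n + n) a b (esRule (n + n)) := by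
  have hmass : ∑ x : Fin n → Bool, ∑ y : Fin n → Bool, bernoulliProb a x * bernoulliProb b y = 1 := by
    rw [← sum_mul_sum, sum_bernoulliProb, sum_bernoulliProb, one_mul]
  rw [expDelta_eq_sum_append, expDelta_eq_sum_append, sum_comm, ← hmass, ← sum_sub_distrib]
  refine sum_congr rfl fun x _ => ?_
  rw [← sum_sub_distrib]
  refine sum_congr rfl fun y _ => ?_
  rw [esRule_append_swap hn]
  ring

lemma sub_mul_le_sub_mul_esRule_append (hn : 0 < n) {a b : ℝ} (hb : 0 ≤ b) (hba : b ≤ a)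
    (ha : a ≤ 1) {d : ℝ} (hd : d ∈ Set.Icc (0 : ℝ) 1) (x y : Fin n → Bool) :
    (bernoulliProb a x * bernoulliProb b y - bernoulliProb b x * bernoulliProb a y) * d ≤
      (bernoulliProb a x * bernoulliProb b y - bernoulliProb b x * bernoulliProb a y) *
        esRule (n + n) (Fin.append x y) := by
  rw [esRule_append hn]
  rcases lt_trichotomy (successes y) (successes x) with h | h | h
  · have := bernoulliProb_mul_cross_le hb hba ha h.le
    rw [if_pos h]
    nlinarith [hd.2]
  · have h₁ := bernoulliProb_mul_cross_le hb hba ha h.le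
    have h₂ := bernoulliProb_mul_cross_le hb hba ha h.ge
    rw [show bernoulliProb a x * bernoulliProb b y - bernoulliProb b x * bernoulliProb a y = 0
      by linarith]
    simp
  · have := bernoulliProb_mul_cross_le hb hba ha h.le
    rw [if_neg h.not_gt, if_neg h.ne]
    nlinarith [hd.1]

lemma expDelta_sub_le_esRule (hn : 0 < n) {a b : ℝ} (hb : 0 ≤ b) (hba : b ≤ a) (ha : a ≤ 1)
    {δ : (Fin (n + n) → Bool) → ℝ} (hδ : ∀ ω, δ ω ∈ Set.Icc (0 : ℝ) 1) :
    expDelta (n + n) a b δ - expDelta (n + n) b a δ ≤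
      expDelta (n + n) a b (esRule (n + n)) - expDelta (n + n) b a (esRule (n + n)) := by
  simp only [expDelta_eq_sum_append, ← sum_sub_distrib]
  refine sum_le_sum fun x _ => sum_le_sum fun y _ => ?_
  have := sub_mul_le_sub_mul_esRule_append hn hb hba ha (hδ (Fin.append x y)) x y
  linarith

lemma regret_esRule_swap (hn : 0 < n) (a b : ℝ) :
    regret N (n + n) b a (esRule (n + n)) = regret N (n + n) a b (esRule (n + n)) := by
  rw [regret, regret, welfare, welfare, expDelta_esRule_swap hn, max_comm]
  ring

lemma regret_esRule_add_le (hn : 0 < n) (hnN : n + n ≤ N) {a b : ℝ} (hb : 0 ≤ b)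
    (hba : b ≤ a) (ha : a ≤ 1) {δ : (Fin (n + n) → Bool) → ℝ}
    (hδ : ∀ ω, δ ω ∈ Set.Icc (0 : ℝ) 1) :
    regret N (n + n) a b (esRule (n + n)) + regret N (n + n) b a (esRule (n + n)) ≤
      regret N (n + n) a b δ + regret N (n + n) b a δ := by
  rw [regret_add_regret_swap, regret_add_regret_swap]
  have hweight : (0 : ℝ) ≤ (N - (n + n : ℕ)) * (a - b) :=
    mul_nonneg (sub_nonneg.mpr (Nat.cast_le.mpr hnN)) (sub_nonneg.mpr hba)
  exact sub_le_sub_left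
    (mul_le_mul_of_nonneg_left (expDelta_sub_le_esRule hn hb hba ha hδ) hweight) _

lemma regret_esRule_le_max (hn : 0 < n) (hnN : n + n ≤ N) {a b : ℝ}
    (ha : a ∈ Set.Icc (0 : ℝ) 1) (hb : b ∈ Set.Icc (0 : ℝ) 1) {δ : (Fin (n + n) → Bool) → ℝ}
    (hδ : ∀ ω, δ ω ∈ Set.Icc (0 : ℝ) 1) :
    regret N (n + n) a b (esRule (n + n)) ≤
      max (regret N (n + n) a b δ) (regret N (n + n) b a δ) := by
  wlog hba : b ≤ a generalizing a b
  · rw [← regret_esRule_swap hn, max_comm]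
    exact this hb ha (le_of_not_ge hba)
  have hsum := regret_esRule_add_le hn hnN hb.1 hba ha.2 hδ
  rw [regret_esRule_swap hn a b] at hsum
  linarith [le_max_left (regret N (n + n) a b δ) (regret N (n + n) b a δ),
    le_max_right (regret N (n + n) a b δ) (regret N (n + n) b a δ)]

end Append

theorem empirical_success_minimax_finite_population
    (N m : ℕ) (hm : Even m) (h2 : 2 ≤ m) (hmN : m ≤ N)
    (δ : (Fin m → Bool) → ℝ) (hδ : ∀ ω, δ ω ∈ Set.Icc (0 : ℝ) 1) :
    (⨆ p : Set.Icc (0 : ℝ) 1 × Set.Icc (0 : ℝ) 1,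
        regret N m (p.1 : ℝ) (p.2 : ℝ) (esRule m)) ≤
      ⨆ p : Set.Icc (0 : ℝ) 1 × Set.Icc (0 : ℝ) 1,
        regret N m (p.1 : ℝ) (p.2 : ℝ) δ := by
  obtain ⟨n, rfl⟩ := hm
  have hbdd : BddAbove (Set.range fun p : Set.Icc (0 : ℝ) 1 × Set.Icc (0 : ℝ) 1 =>
      regret N (n + n) (p.1 : ℝ) (p.2 : ℝ) δ) :=
    (isCompact_range ((continuous_regret N (n + n) δ).comp
      (continuous_subtype_val.prodMap continuous_subtype_val))).bddAbove
  refine ciSup_le fun p => (regret_esRule_le_max (by omega) hmN p.1.2 p.2.2 hδ).trans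
    (max_le (le_ciSup hbdd p) (le_ciSup hbdd (p.2, p.1)))
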